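/- Let p ≥ 2 be an integer and let p₁, q₁ be relatively prime positive integers with pq₁ − p₁ > 0 and q₁ ≥ 2. Define s_j(q/p') = ⌊jp'/q⌋_* − ⌊(j−1)p'/q⌋_*. Then s_1(q₁/(pq₁−p₁)) = p − s_1(q₁/p₁) + 1. -/

import Mathlib

/-- `⌊x⌋_*`, the greatest integer strictly smaller than the real number `x`
(equals `⌈x⌉ - 1`). -/
noncomputable def fstar (x : ℝ) : ℤ := ⌈x⌉ - 1

/-!
Write `x = p₁ / q₁`. Since `(p q₁ - p₁) / q₁ = p - x`, both sides equal `p - ⌊x⌋`: on the left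
`⌊p - x⌋_* = p - ⌊x⌋ - 1` and `⌊0⌋_* = -1`, on the right `⌊x⌋_* = ⌊x⌋` because coprimality and
`q₁ ≥ 2` make `x` a non-integer.
-/

theorem IsCoprime.div_notMem_range_intCast {K : Type*} [Field K] [CharZero K] {a b : ℤ}
    (hab : IsCoprime a b) (hb : 1 < b) : (a : K) / b ∉ Set.range Int.cast := by
  rintro ⟨n, hn⟩
  have hb0 : (b : K) ≠ 0 := by exact_mod_cast (show b ≠ 0 by omega)
  have hdvd : b ∣ a := ⟨n, by
    have : (a : K) = n * b := (div_eq_iff hb0).mp hn.symm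
    exact_mod_cast this.trans (mul_comm _ _)⟩
  have hunit := Int.isUnit_iff.mp (hab.isUnit_of_dvd' hdvd dvd_rfl)
  omega

theorem fstar_zero : fstar 0 = -1 := by
  simp [fstar]

theorem fstar_eq_floor {x : ℝ} (hx : x ∉ Set.range Int.cast) : fstar x = ⌊x⌋ := by
  rw [fstar, (Int.ceil_eq_floor_add_one_iff_notMem x).mpr hx, add_sub_cancel_right]

theorem fstar_intCast_sub (n : ℤ) (x : ℝ) : fstar (n - x) = n - ⌊x⌋ - 1 := by
  rw [fstar, sub_eq_add_neg (n : ℝ), Int.ceil_intCast_add, Int.ceil_neg]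
  ring

theorem sseq_first_term_general (p p₁ q₁ : ℤ) (hq₁ : 2 ≤ q₁)
    (hcop : IsCoprime p₁ q₁) :
    fstar ((1 : ℝ) * ((p * q₁ - p₁ : ℤ) : ℝ) / (q₁ : ℝ)) -
      fstar (((1 : ℝ) - 1) * ((p * q₁ - p₁ : ℤ) : ℝ) / (q₁ : ℝ)) =
    p - (fstar ((1 : ℝ) * (p₁ : ℝ) / (q₁ : ℝ)) -
      fstar (((1 : ℝ) - 1) * (p₁ : ℝ) / (q₁ : ℝ))) + 1 := by
  have hq₁0 : (q₁ : ℝ) ≠ 0 := by exact_mod_cast (show q₁ ≠ 0 by omega)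
  have hsplit : ((p * q₁ - p₁ : ℤ) : ℝ) / q₁ = p - (p₁ : ℝ) / q₁ := by
    field_simp
    push_cast
    ring
  have hfloor : fstar ((p₁ : ℝ) / q₁) = ⌊(p₁ : ℝ) / q₁⌋ :=
    fstar_eq_floor (hcop.div_notMem_range_intCast (by omega))
  simp only [one_mul, sub_self, zero_mul, zero_div, fstar_zero, hsplit, fstar_intCast_sub, hfloor]
  ring

/-- For `p ≥ 2` and relatively prime positive integers `p₁, q₁` with `p·q₁ − p₁ > 0`
and `q₁ ≥ 2`, we have `s_1(q₁/(p·q₁−p₁)) = p − s_1(q₁/p₁) + 1`,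
where `s_j(q/p') = ⌊j·p'/q⌋_* − ⌊(j−1)·p'/q⌋_*`. -/
theorem sseq_first_term (p p₁ q₁ : ℤ) (hp : 2 ≤ p) (hp₁ : 0 < p₁) (hq₁ : 2 ≤ q₁)
    (hcop : IsCoprime p₁ q₁) (hpos : 0 < p * q₁ - p₁) :
    fstar ((1 : ℝ) * ((p * q₁ - p₁ : ℤ) : ℝ) / (q₁ : ℝ)) -
      fstar (((1 : ℝ) - 1) * ((p * q₁ - p₁ : ℤ) : ℝ) / (q₁ : ℝ)) =
    p - (fstar ((1 : ℝ) * (p₁ : ℝ) / (q₁ : ℝ)) -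
      fstar (((1 : ℝ) - 1) * (p₁ : ℝ) / (q₁ : ℝ))) + 1 :=
  sseq_first_term_general p p₁ q₁ hq₁ hcop
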